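/- For all positive integers K and N and every i ∈ {1,…,N}, the subgraph of the enhanced conflict graph G_{K,N} induced by the vertex set consisting of all unicast vertices u_{kj} (k ∈ {1,…,K}, j ∈ {1,…,N}) together with the broadcast vertices b_{ki} (k ∈ {1,…,K}) destined to output i is a perfect graph. -/

import Mathlib

open SimpleGraph Pointwise

/-- Vertex set of the enhanced conflict graph `G_{K,N}`: `(false, i, j)` is the unicast vertex
`u_{ij}` (input `i`, output `j`), and `(true, i, j)` is the broadcast (subflow) vertex `b_{ij}`. -/
abbrev CGVert (K N : ℕ) := Bool × Fin K × Fin N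

/-- The enhanced conflict graph `G_{K,N}` of a `K × N` switch with unicast and broadcast traffic:
two distinct vertices are adjacent iff they share an input and at least one of them is a unicast,
or they share an output and come from different inputs. -/
def ECG (K N : ℕ) : SimpleGraph (CGVert K N) where
  Adj v w := v ≠ w ∧
    ((v.2.1 = w.2.1 ∧ (v.1 = false ∨ w.1 = false)) ∨
     (v.2.2 = w.2.2 ∧ v.2.1 ≠ w.2.1))
  symm := ⟨by
    rintro v w ⟨hne, h⟩
    refine ⟨hne.symm, ?_⟩
    rcases h with ⟨h1, h2⟩ | ⟨h1, h2⟩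
    · exact Or.inl ⟨h1.symm, h2.symm⟩
    · exact Or.inr ⟨h1.symm, h2.symm⟩⟩
  loopless := ⟨fun v h => h.1 rfl⟩

/-- The stable set polytope of a graph: the convex hull of the 0/1 indicator vectors of the
independent (stable) sets. -/
def STAB {V : Type*} (G : SimpleGraph V) : Set (V → ℝ) :=
  convexHull ℝ {x | ∃ S : Set V, (∀ v ∈ S, ∀ w ∈ S, ¬ G.Adj v w) ∧
    x = S.indicator (fun _ => (1 : ℝ))}

/-- The fractional stable set polytope of a graph: nonnegative vectors whose sum over every
clique is at most `1`. -/
def QSTAB {V : Type*} (G : SimpleGraph V) : Set (V → ℝ) :=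
  {x | (∀ v, 0 ≤ x v) ∧ ∀ Q : Finset V, G.IsClique (Q : Set V) → ∑ v ∈ Q, x v ≤ 1}

/-- A graph is perfect if every induced subgraph has chromatic number equal to its clique
number. -/
def SimpleGraph.IsPerfect {V : Type*} (G : SimpleGraph V) : Prop :=
  ∀ S : Set V, (G.induce S).chromaticNumber = ((G.induce S).cliqueNum : ℕ∞)

/-- A graph has an odd hole if some induced subgraph is a chordless cycle of odd length at
least 5. -/
def SimpleGraph.HasOddHole {V : Type*} (G : SimpleGraph V) : Prop :=
  ∃ (n : ℕ) (S : Set V), 5 ≤ n ∧ Odd n ∧ Nonempty (G.induce S ≃g cycleGraph n)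

/-!
Read `u_{kj}` as an edge from input `k` to output `j` and `b_{ki}` as an edge from input `k` to
output `i`. Two of the vertices kept here are adjacent exactly when these edges share an endpoint,
so the graph and all its induced subgraphs are line graphs of bipartite multigraphs. In such a
graph the edges at one endpoint form a clique, so the maximum degree `Δ` is at most the clique
number, and König's theorem colours the edges with `Δ` colours: colour one edge at a time, and when
the colour `α` free at its input differs from the colour `β` free at its output, swap `α` and `β`
along the alternating path leaving the input, which cannot end at the output.
-/

open Finset

theorem Relation.ReflTransGen.of_tail {α : Type*} {R : α → α → Prop} {a b c : α}
    (hinj : ∀ ⦃x y z⦄, R x z → R y z → x = y) (ha : ∀ x, ¬ R x a)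
    (hbc : R b c) (hac : Relation.ReflTransGen R a c) : Relation.ReflTransGen R a b := by
  rcases hac.cases_tail with rfl | ⟨d, had, hdc⟩
  · exact absurd hbc (ha b)
  · exact hinj hdc hbc ▸ had

namespace SimpleGraph

variable {W κ : Type*}

def IsColoringOn (G : SimpleGraph W) (f : W → κ) (s : Set W) : Prop :=
  ∀ ⦃v⦄, v ∈ s → ∀ ⦃w⦄, w ∈ s → G.Adj v w → f v ≠ f w

variable {G : SimpleGraph W} {f : W → κ} {s : Set W}

theorem IsColoringOn.update_insert [DecidableEq W] (hf : G.IsColoringOn f s) {v : W} {γ : κ}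
    (hv : ∀ u ∈ s, G.Adj v u → f u ≠ γ) :
    G.IsColoringOn (Function.update f v γ) (insert v s) := by
  rintro x hx y hy hxy
  rcases eq_or_ne x v with rfl | hxv
  · rw [Function.update_self, Function.update_of_ne hxy.ne.symm]
    exact (hv y (hy.resolve_left hxy.ne.symm) hxy).symm
  rcases eq_or_ne y v with rfl | hyv
  · rw [Function.update_self, Function.update_of_ne hxv]
    exact hv x (hx.resolve_left hxv) hxy.symm
  rw [Function.update_of_ne hxv, Function.update_of_ne hyv]
  exact hf (hx.resolve_left hxv) (hy.resolve_left hyv) hxy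

theorem IsColoringOn.swap_on [DecidableEq κ] (hf : G.IsColoringOn f s) {α β : κ} {C : Set W}
    [DecidablePred (· ∈ C)] (hC : ∀ u ∈ C, f u = α ∨ f u = β)
    (hC_adj : ∀ ⦃v w⦄, v ∈ s → w ∈ s → G.Adj v w → v ∈ C → (f w = α ∨ f w = β) → w ∈ C) :
    G.IsColoringOn (fun u => if u ∈ C then Equiv.swap α β (f u) else f u) s := by
  have hmixed : ∀ ⦃v w⦄, v ∈ s → w ∈ s → G.Adj v w → v ∈ C → w ∉ C →
      Equiv.swap α β (f v) ≠ f w := by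
    intro v w hv hw hvw hvC hwC
    have hfw : ¬ (f w = α ∨ f w = β) := fun hfw => hwC (hC_adj hv hw hvw hvC hfw)
    rcases hC v hvC with h | h <;> rw [h] <;>
      simp only [Equiv.swap_apply_left, Equiv.swap_apply_right] <;> exact fun h' => hfw (by tauto)
  intro v hv w hw hvw
  by_cases hvC : v ∈ C <;> by_cases hwC : w ∈ C <;> simp only [hvC, hwC, if_true, if_false]
  · exact (Equiv.swap α β).injective.ne (hf hv hw hvw)
  · exact hmixed hv hw hvw hvC hwC
  · exact (hmixed hw hv hvw.symm hwC hvC).symm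
  · exact hf hv hw hvw

end SimpleGraph

theorem Finset.exists_lt_forall_apply_ne {ι : Type*} {t : Finset ι} {D : ℕ} (f : ι → ℕ)
    (ht : #t < D) : ∃ γ < D, ∀ u ∈ t, f u ≠ γ := by
  by_contra! h
  have : range D ⊆ t.image f := fun γ hγ => by
    obtain ⟨u, hu, rfl⟩ := h γ (mem_range.mp hγ)
    exact mem_image_of_mem f hu
  have := (card_le_card this).trans card_image_le
  rw [card_range] at this
  omega

section BipartiteLineGraph

variable {W A B κ : Type*} (r : W → A) (c : W → B)

/-- The line graph of the bipartite multigraph with edge set `W`, in which the edge `w` joins the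
row `r w` to the column `c w`. -/
def bipartiteLineGraph : SimpleGraph W where
  Adj v w := v ≠ w ∧ (r v = r w ∨ c v = c w)
  symm := ⟨fun _ _ h => ⟨h.1.symm, h.2.imp Eq.symm Eq.symm⟩⟩
  loopless := ⟨fun _ h => h.1 rfl⟩

/-- Steps of an `α`/`β`-alternating path that leaves its first row along a `β`-edge. -/
def kempeStep (f : W → κ) (s : Set W) (α β : κ) (v w : W) : Prop :=
  v ∈ s ∧ w ∈ s ∧ ((f v = β ∧ f w = α ∧ c v = c w) ∨ (f v = α ∧ f w = β ∧ r v = r w))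

def kempeChain (f : W → κ) (s : Set W) (α β : κ) (w₀ : W) : Set W :=
  {u | Relation.ReflTransGen (kempeStep r c f s α β) w₀ u}

variable {r c} {f : W → κ} {s : Set W} {α β : κ} {w₀ : W}

theorem SimpleGraph.IsColoringOn.eq_of_incident (hf : (bipartiteLineGraph r c).IsColoringOn f s)
    {v w : W} (hv : v ∈ s) (hw : w ∈ s) (hvw : r v = r w ∨ c v = c w) (hfvw : f v = f w) :
    v = w :=
  by_contra fun hne => hf hv hw ⟨hne, hvw⟩ hfvw

theorem kempeStep_left_unique (hf : (bipartiteLineGraph r c).IsColoringOn f s) (hαβ : α ≠ β)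
    ⦃x y z : W⦄ (hxz : kempeStep r c f s α β x z) (hyz : kempeStep r c f s α β y z) : x = y := by
  obtain ⟨hx, -, hxz⟩ := hxz
  obtain ⟨hy, -, hyz⟩ := hyz
  rcases hxz with ⟨hfx, hfz, hxz⟩ | ⟨hfx, hfz, hxz⟩ <;>
    rcases hyz with ⟨hfy, hfz', hyz⟩ | ⟨hfy, hfz', hyz⟩
  · exact hf.eq_of_incident hx hy (.inr (hxz.trans hyz.symm)) (hfx.trans hfy.symm)
  · exact absurd (hfz.symm.trans hfz') hαβ
  · exact absurd (hfz'.symm.trans hfz) hαβ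
  · exact hf.eq_of_incident hx hy (.inl (hxz.trans hyz.symm)) (hfx.trans hfy.symm)

/-- Since `α` is missing at the row of the `β`-edge `w₀`, the alternating path cannot enter `w₀`;
with unique predecessors this makes the chain closed under backward steps too. -/
theorem mem_kempeChain_iff_of_kempeStep (hf : (bipartiteLineGraph r c).IsColoringOn f s)
    (hαβ : α ≠ β) (ha : ∀ u ∈ s, r u = r w₀ → f u ≠ α) (hfw₀ : f w₀ = β) {v w : W}
    (hvw : kempeStep r c f s α β v w) :
    v ∈ kempeChain r c f s α β w₀ ↔ w ∈ kempeChain r c f s α β w₀ := by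
  refine ⟨fun hv => hv.tail hvw,
    Relation.ReflTransGen.of_tail (kempeStep_left_unique hf hαβ) ?_ hvw⟩
  rintro x ⟨hx, -, ⟨-, hfx, -⟩ | ⟨hfx, -, hrx⟩⟩
  exacts [hαβ (hfx.symm.trans hfw₀), ha x hx hrx hfx]

theorem apply_eq_or_of_mem_kempeChain (hfw₀ : f w₀ = β) {u : W}
    (hu : u ∈ kempeChain r c f s α β w₀) : f u = α ∨ f u = β := by
  rcases Relation.ReflTransGen.cases_tail hu with rfl | ⟨_, -, -, -, ⟨-, h, -⟩ | ⟨-, h, -⟩⟩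
  exacts [.inr hfw₀, .inl h, .inr h]

theorem mem_kempeChain_of_adj (hf : (bipartiteLineGraph r c).IsColoringOn f s)
    (hαβ : α ≠ β) (ha : ∀ u ∈ s, r u = r w₀ → f u ≠ α) (hfw₀ : f w₀ = β) {v w : W}
    (hv : v ∈ s) (hw : w ∈ s) (hvw : (bipartiteLineGraph r c).Adj v w)
    (hvC : v ∈ kempeChain r c f s α β w₀) (hfw : f w = α ∨ f w = β) :
    w ∈ kempeChain r c f s α β w₀ := by
  have hne := hf hv hw hvw
  have hiff := mem_kempeChain_iff_of_kempeStep hf hαβ ha hfw₀ (v := v) (w := w)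
  have hiff' := mem_kempeChain_iff_of_kempeStep hf hαβ ha hfw₀ (v := w) (w := v)
  rcases apply_eq_or_of_mem_kempeChain hfw₀ hvC with hfv | hfv <;> rcases hfw with hfw | hfw <;>
    rcases hvw.2 with h | h
  all_goals first
    | exact absurd (hfv.trans hfw.symm) hne
    | exact (hiff ⟨hv, hw, by tauto⟩).mp hvC
    | exact (hiff' ⟨hw, hv, by tauto⟩).mpr hvC

/-- Swap along the alternating path from the `β`-edge at `a`: it could enter column `b` only
through a `β`-edge. -/
theorem exists_isColoringOn_forall_ne [DecidableEq κ]
    (hf : (bipartiteLineGraph r c).IsColoringOn f s) {a : A} {b : B}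
    (ha : ∀ u ∈ s, r u = a → f u ≠ α) (hb : ∀ u ∈ s, c u = b → f u ≠ β) :
    ∃ g : W → κ, (bipartiteLineGraph r c).IsColoringOn g s ∧
      (∀ u, g u = f u ∨ g u = α ∨ g u = β) ∧
      (∀ u ∈ s, r u = a → g u ≠ β) ∧ (∀ u ∈ s, c u = b → g u ≠ β) := by
  classical
  by_cases hw₀ : ∃ w₀ ∈ s, r w₀ = a ∧ f w₀ = β
  swap
  · push Not at hw₀
    exact ⟨f, hf, fun _ => .inl rfl, hw₀, hb⟩
  obtain ⟨w₀, hw₀s, rfl, hfw₀⟩ := hw₀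
  have hαβ : α ≠ β := fun h => ha w₀ hw₀s rfl (hfw₀.trans h.symm)
  set C := kempeChain r c f s α β w₀
  have hC : ∀ u ∈ C, f u = α ∨ f u = β := fun _ => apply_eq_or_of_mem_kempeChain hfw₀
  refine ⟨fun u => if u ∈ C then Equiv.swap α β (f u) else f u,
    hf.swap_on hC fun _ _ hv hw hvw hvC hfw =>
      mem_kempeChain_of_adj hf hαβ ha hfw₀ hv hw hvw hvC hfw,
    fun u => ?_, fun u hu hru => ?_, fun u hu hcu => ?_⟩
  · simp only [Equiv.swap_apply_def]
    split_ifs <;> simp_all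
  · by_cases huC : u ∈ C
    · have hfu : f u = β := (hC u huC).resolve_left (ha u hu hru)
      simpa only [if_pos huC, hfu, Equiv.swap_apply_right] using hαβ
    · simp only [if_neg huC]
      intro hfu
      exact huC (hf.eq_of_incident hw₀s hu (.inl hru.symm) (hfw₀.trans hfu.symm) ▸
        Relation.ReflTransGen.refl)
  · by_cases huC : u ∈ C
    · rcases Relation.ReflTransGen.cases_tail huC with
        rfl | ⟨e, -, he, -, ⟨hfe, -, hce⟩ | ⟨-, hfu, -⟩⟩
      · exact absurd hfw₀ (hb _ hu hcu)
      · exact absurd hfe (hb e he (hce.trans hcu))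
      · exact absurd hfu (hb u hu hcu)
    · simpa only [if_neg huC] using hb u hu hcu

/-- König's edge colouring theorem, `D` bounding the degrees of the rows and columns. -/
theorem exists_isColoringOn_lt [DecidableEq W] [DecidableEq A] [DecidableEq B] {D : ℕ}
    (s : Finset W) (hr : ∀ a, #{u ∈ s | r u = a} ≤ D) (hc : ∀ b, #{u ∈ s | c u = b} ≤ D) :
    ∃ f : W → ℕ, (bipartiteLineGraph r c).IsColoringOn f s ∧ ∀ u ∈ s, f u < D := by
  induction s using Finset.induction_on with
  | empty => exact ⟨fun _ => 0, by simp [SimpleGraph.IsColoringOn], by simp⟩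
  | insert v s hv ih =>
    have hmono {p : W → Prop} [DecidablePred p] : #{u ∈ s | p u} ≤ #{u ∈ insert v s | p u} :=
      card_le_card (filter_subset_filter _ (subset_insert v s))
    have hlt {p : W → Prop} [DecidablePred p] (hp : p v) (hD : #{u ∈ insert v s | p u} ≤ D) :
        #{u ∈ s | p u} < D := by
      rw [filter_insert, if_pos hp, card_insert_of_notMem fun h => hv (mem_filter.mp h).1] at hD
      omega
    obtain ⟨f, hf, hfD⟩ := ih (fun a => hmono.trans (hr a)) (fun b => hmono.trans (hc b))
    obtain ⟨α, hαD, hα⟩ := exists_lt_forall_apply_ne f (hlt (p := (r · = r v)) rfl (hr (r v)))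
    obtain ⟨β, hβD, hβ⟩ := exists_lt_forall_apply_ne f (hlt (p := (c · = c v)) rfl (hc (c v)))
    obtain ⟨g, hg, hg_val, hg_row, hg_col⟩ := exists_isColoringOn_forall_ne hf
      (fun u hu hru => hα u (mem_filter.mpr ⟨hu, hru⟩))
      (fun u hu hcu => hβ u (mem_filter.mpr ⟨hu, hcu⟩))
    refine ⟨Function.update g v β, ?_, fun u hu => ?_⟩
    · rw [coe_insert]
      exact hg.update_insert fun u hu hvu =>
        hvu.2.elim (fun h => hg_row u hu h.symm) (fun h => hg_col u hu h.symm)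
    · rcases eq_or_ne u v with rfl | huv
      · rwa [Function.update_self]
      · rw [Function.update_of_ne huv]
        have hu : u ∈ s := (mem_insert.mp hu).resolve_left huv
        rcases hg_val u with h | h | h <;> rw [h]
        exacts [hfD u hu, hαD, hβD]

theorem chromaticNumber_bipartiteLineGraph [Finite W] :
    (bipartiteLineGraph r c).chromaticNumber = (bipartiteLineGraph r c).cliqueNum := by
  classical
  have := Fintype.ofFinite W
  have hfiber {p : W → Prop} [DecidablePred p] (hp : ∀ v w, p v → p w → r v = r w ∨ c v = c w) :
      #{u | p u} ≤ (bipartiteLineGraph r c).cliqueNum :=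
    IsClique.card_le_cliqueNum (tc := fun v hv w hw hne =>
      ⟨hne, hp v w (by simpa using hv) (by simpa using hw)⟩)
  obtain ⟨f, hf, hfD⟩ := exists_isColoringOn_lt (D := (bipartiteLineGraph r c).cliqueNum) univ
    (fun a => hfiber fun v w hv hw => .inl (hv.trans hw.symm))
    (fun b => hfiber fun v w hv hw => .inr (hv.trans hw.symm))
  refine le_antisymm (Colorable.chromaticNumber_le ?_) cliqueNum_le_chromaticNumber
  exact (colorable_iff_exists_bdd_nat_coloring _).mpr
    ⟨Coloring.mk f fun h => hf (by simp) (by simp) h, fun v => hfD v (mem_univ v)⟩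

theorem induce_bipartiteLineGraph (S : Set W) :
    (bipartiteLineGraph r c).induce S = bipartiteLineGraph (fun v : S => r v) (fun v => c v) := by
  ext v w
  simp [bipartiteLineGraph, Subtype.ext_iff]

theorem isPerfect_bipartiteLineGraph [Finite W] : (bipartiteLineGraph r c).IsPerfect := fun S => by
  rw [induce_bipartiteLineGraph]
  exact chromaticNumber_bipartiteLineGraph

end BipartiteLineGraph

theorem induce_ECG_eq_bipartiteLineGraph {K N : ℕ} (i : Fin N) :
    (ECG K N).induce {v | v.1 = false ∨ v.2.2 = i} =
      bipartiteLineGraph (fun v => v.1.2.1) (fun v => if v.1.1 then i else v.1.2.2) := by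
  ext ⟨⟨b, k, j⟩, hv⟩ ⟨⟨b', k', j'⟩, hw⟩
  simp only [Set.mem_ofPred_eq] at hv hw
  cases b <;> cases b' <;> simp only [Bool.true_eq_false, false_or, true_or] at hv hw <;>
    subst_vars <;> simp [ECG, bipartiteLineGraph] <;> tauto

theorem stmt7_general (K N : ℕ) (i : Fin N) :
    ((ECG K N).induce {v : CGVert K N | v.1 = false ∨ v.2.2 = i}).IsPerfect := by
  rw [induce_ECG_eq_bipartiteLineGraph]
  exact isPerfect_bipartiteLineGraph

theorem stmt7 (K N : ℕ) (hK : 0 < K) (hN : 0 < N) (i : Fin N) :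
    ((ECG K N).induce {v : CGVert K N | v.1 = false ∨ v.2.2 = i}).IsPerfect :=
  stmt7_general K N i
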